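/- Let (γ, ℓ, ℓ⁽²⁾) be null metric hypersurface data on a finite-dimensional real vector space V with contravariant data (P, n, 0), let S ⊆ V be a subspace complementary to the line spanned by n, h := γ|_S (which is nondegenerate), ℓ♯ ∈ S the unique vector with h(ℓ♯, X) = ℓ(X) for all X ∈ S, and ℓ♯⁽²⁾ := h(ℓ♯, ℓ♯). Then for every symmetric bilinear form ℛ on V, setting H := −½⟨ℛ, P⟩ and J := ℛ(n, ·), the identity tr_h(ℛ|_S) − 2 J(ℓ♯) + (ℓ♯⁽²⁾ − ℓ⁽²⁾)·J(n) + 2H = 0 holds, where tr_h(ℛ|_S) denotes the trace of the restriction of ℛ to S with respect to h (i.e. the full contraction of ℛ|_S with the inverse form h♯). -/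
import Mathlib


/-- The full contraction `⟨T, P⟩` of a bilinear form `T` on `V` with a bilinear form `P` on
`V*`: the trace of the endomorphism `P̂ ∘ T̂` of `V`, where `T̂ : V → V*` is `v ↦ T(v,·)` and
`P̂ : V* → V` is the linear map determined by `β(P̂(α)) = P(α,β)` for all `β ∈ V*`
(identifying `V` with its double dual). -/
noncomputable def contr {V : Type*} [AddCommGroup V] [Module ℝ V] [FiniteDimensional ℝ V]
    (P : Module.Dual ℝ V →ₗ[ℝ] Module.Dual ℝ V →ₗ[ℝ] ℝ) :
    (V →ₗ[ℝ] Module.Dual ℝ V) →ₗ[ℝ] ℝ :=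
  (LinearMap.trace ℝ V).comp
    (LinearMap.llcomp ℝ V (Module.Dual ℝ V) V
      ((Module.evalEquiv ℝ V).symm.toLinearMap.comp P))


lemma contr_apply' {V : Type*} [AddCommGroup V] [Module ℝ V] [FiniteDimensional ℝ V]
    (P : Module.Dual ℝ V →ₗ[ℝ] Module.Dual ℝ V →ₗ[ℝ] ℝ)
    (T : V →ₗ[ℝ] Module.Dual ℝ V) :
    contr P T = LinearMap.trace ℝ V
      (((Module.evalEquiv ℝ V).symm.toLinearMap.comp P).comp T) := rfl

lemma trace_smulRight' {V : Type*} [AddCommGroup V] [Module ℝ V] [FiniteDimensional ℝ V]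
    (f : V →ₗ[ℝ] ℝ) (b : V) : LinearMap.trace ℝ V (f.smulRight b) = f b := by
  have h : f.smulRight b = (LinearMap.toSpanSingleton ℝ V b).comp f := by
    ext v; simp [LinearMap.toSpanSingleton_apply]
  rw [h, LinearMap.trace_comp_comm']
  have h2 : f.comp (LinearMap.toSpanSingleton ℝ V b) = f b • (LinearMap.id : ℝ →ₗ[ℝ] ℝ) := by
    ext; simp [LinearMap.toSpanSingleton_apply, mul_comm]
  rw [h2, map_smul, LinearMap.trace_id]
  simp

/-- The rank-one bilinear form `(α,β) ↦ α a * β b` on the dual. -/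
noncomputable def Bform {V : Type*} [AddCommGroup V] [Module ℝ V] (a b : V) :
    Module.Dual ℝ V →ₗ[ℝ] Module.Dual ℝ V →ₗ[ℝ] ℝ :=
  LinearMap.smulRight (Module.Dual.eval ℝ V a) (Module.Dual.eval ℝ V b)

lemma Bform_apply {V : Type*} [AddCommGroup V] [Module ℝ V] (a b : V)
    (α β : Module.Dual ℝ V) : Bform a b α β = α a * β b := by
  simp [Bform, smul_eq_mul]

lemma contr_Bform {V : Type*} [AddCommGroup V] [Module ℝ V] [FiniteDimensional ℝ V]
    (a b : V) (T : V →ₗ[ℝ] Module.Dual ℝ V) : contr (Bform a b) T = T b a := by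
  rw [contr_apply']
  have h : ((Module.evalEquiv ℝ V).symm.toLinearMap.comp (Bform a b)).comp T
      = ((Module.Dual.eval ℝ V a).comp T).smulRight b := by
    ext v
    have hb : (Module.evalEquiv ℝ V).symm (Module.Dual.eval ℝ V b) = b := by
      rw [LinearEquiv.symm_apply_eq, Module.evalEquiv_apply]
    simp only [LinearMap.comp_apply, LinearMap.coe_comp, LinearEquiv.coe_coe,
      LinearMap.smulRight_apply, Function.comp_apply]
    rw [show Bform a b (T v) = (T v a) • Module.Dual.eval ℝ V b from rfl]
    rw [map_smul, hb]
    rfl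
  rw [h, trace_smulRight']
  rfl

lemma contr_compl₁₂ {V : Type*} [AddCommGroup V] [Module ℝ V] [FiniteDimensional ℝ V]
    (S : Submodule ℝ V) (hs : Module.Dual ℝ S →ₗ[ℝ] Module.Dual ℝ S →ₗ[ℝ] ℝ)
    (ℛ : V →ₗ[ℝ] V →ₗ[ℝ] ℝ) :
    contr (hs.compl₁₂ S.subtype.dualMap S.subtype.dualMap) ℛ
      = contr hs (ℛ.compl₁₂ S.subtype S.subtype) := by
  rw [contr_apply', contr_apply']
  set d := S.subtype.dualMap
  set ES := (Module.evalEquiv ℝ S).symm.toLinearMap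
  have h1 : ((Module.evalEquiv ℝ V).symm.toLinearMap.comp
        (hs.compl₁₂ d d)).comp ℛ
      = S.subtype.comp (((ES.comp hs).comp d).comp ℛ) := by
    ext v
    simp only [LinearMap.comp_apply, LinearMap.coe_comp, Function.comp_apply,
      LinearEquiv.coe_coe]
    rw [LinearEquiv.symm_apply_eq]
    ext β
    simp only [Module.evalEquiv_apply, Module.Dual.eval_apply, LinearMap.compl₁₂_apply]
    rw [← Module.apply_evalEquiv_symm_apply ℝ S (d β) (hs (d (ℛ v)))]
    rfl
  rw [h1, LinearMap.trace_comp_comm']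
  congr 1

/-- Let `(γ, ℓ, ℓ2)` be null metric hypersurface data (contravariant data
`(P, n, 0)`), `S` a subspace complementary to the line spanned by `n`, `h := γ|_S`
(nondegenerate), `ℓ♯ ∈ S` the unique vector with `h(ℓ♯,X) = ℓ(X)` for `X ∈ S`,
`ℓ♯⁽²⁾ := h(ℓ♯,ℓ♯)`, and `h♯` the inverse form of `h` on `S*`.  Then for every symmetric
bilinear form `ℛ` on `V`, setting `H := −½⟨ℛ,P⟩` and `J := ℛ(n,·)`, the identity
`tr_h(ℛ|_S) − 2J(ℓ♯) + (ℓ♯⁽²⁾ − ℓ2)·J(n) + 2H = 0` holds. -/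
theorem stmt_6 {V : Type*} [AddCommGroup V] [Module ℝ V] [FiniteDimensional ℝ V]
    (γ : V →ₗ[ℝ] V →ₗ[ℝ] ℝ) (ℓ : Module.Dual ℝ V) (ℓ2 : ℝ)
    (hγsymm : ∀ x y : V, γ x y = γ y x)
    (hnondeg : ∀ (W : V) (a : ℝ),
      (∀ (Z : V) (b : ℝ), γ W Z + a * ℓ Z + b * ℓ W + a * b * ℓ2 = 0) → W = 0 ∧ a = 0)
    (P : Module.Dual ℝ V →ₗ[ℝ] Module.Dual ℝ V →ₗ[ℝ] ℝ) (n : V)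
    (hPsymm : ∀ α β : Module.Dual ℝ V, P α β = P β α)
    (h1 : ∀ v : V, γ n v = 0)
    (h2 : ℓ n = 1)
    (h3 : ∀ α : Module.Dual ℝ V, P α ℓ + ℓ2 * α n = 0)
    (h4 : ∀ (α : Module.Dual ℝ V) (v : V), P α (γ v) + α n * ℓ v = α v)
    (S : Submodule ℝ V) (hS : IsCompl S (Submodule.span ℝ {n}))
    (ls : S) (hls : ∀ X : S, γ (ls : V) (X : V) = ℓ (X : V))
    (hs : Module.Dual ℝ S →ₗ[ℝ] Module.Dual ℝ S →ₗ[ℝ] ℝ)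
    (hssymm : ∀ α β : Module.Dual ℝ S, hs α β = hs β α)
    (hsinv : ∀ (x : S) (β : Module.Dual ℝ S), hs ((γ (x : V)).domRestrict S) β = β x)
    (ℛ : V →ₗ[ℝ] V →ₗ[ℝ] ℝ) (hRsymm : ∀ a b : V, ℛ a b = ℛ b a) :
    contr hs (ℛ.compl₁₂ S.subtype S.subtype)
      - 2 * ℛ n (ls : V)
      + (γ (ls : V) (ls : V) - ℓ2) * ℛ n n
      + 2 * (-(1 / 2 : ℝ) * contr P ℛ) = 0 := by
  classical
  set d : Module.Dual ℝ V →ₗ[ℝ] Module.Dual ℝ S := S.subtype.dualMap with hd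
  set c : ℝ := γ (ls : V) (ls : V) - ℓ2 with hc
  have hγn : ∀ v : V, γ v n = 0 := fun v => by rw [hγsymm]; exact h1 v
  -- every dual vector decomposes as γ x + t ℓ with x ∈ S
  have hdecomp : ∀ β : Module.Dual ℝ V, ∃ (x : S) (t : ℝ), β = γ (x : V) + t • ℓ := by
    intro β
    set g : S →ₗ[ℝ] Module.Dual ℝ S := d ∘ₗ γ ∘ₗ S.subtype with hg
    have hgx : ∀ x : S, g x = (γ (x : V)).domRestrict S := fun x => rfl
    have hginj : Function.Injective g := by
      rw [← LinearMap.ker_eq_bot]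
      rw [Submodule.eq_bot_iff]
      intro x hx
      have hx0 : g x = 0 := hx
      have : ∀ μ : Module.Dual ℝ S, μ x = 0 := by
        intro μ
        rw [← hsinv x μ, ← hgx, hx0, map_zero]
        rfl
      exact (Module.forall_dual_apply_eq_zero_iff ℝ x).mp this
    have hfin : Module.finrank ℝ S = Module.finrank ℝ (Module.Dual ℝ S) :=
      (Subspace.dual_finrank_eq).symm
    have hgsurj : Function.Surjective g :=
      (LinearMap.injective_iff_surjective_of_finrank_eq_finrank hfin).mp hginj
    obtain ⟨x, hx⟩ := hgsurj (β.domRestrict S - (β n) • ℓ.domRestrict S)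
    refine ⟨x, β n, ?_⟩
    apply LinearMap.ext; intro v
    have hv : v ∈ S ⊔ Submodule.span ℝ {n} := by
      rw [hS.codisjoint.eq_top]; trivial
    obtain ⟨s, hsmem, y, hymem, rfl⟩ := Submodule.mem_sup.mp hv
    obtain ⟨t', rfl⟩ := Submodule.mem_span_singleton.mp hymem
    have hxs : γ (x : V) s = β s - β n * ℓ s := by
      have := LinearMap.congr_fun (hgx x ▸ hx) ⟨s, hsmem⟩
      simpa [smul_eq_mul] using this
    simp only [map_add, map_smul, LinearMap.add_apply, LinearMap.smul_apply, smul_eq_mul,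
      hxs, hγn, h2]
    ring
  -- P agrees with the explicit form P'
  set P' : Module.Dual ℝ V →ₗ[ℝ] Module.Dual ℝ V →ₗ[ℝ] ℝ :=
    hs.compl₁₂ d d - Bform n (ls : V) - Bform (ls : V) n + c • Bform n n with hP'
  have hdγ : ∀ x : S, d (γ (x : V)) = (γ (x : V)).domRestrict S := fun x => rfl
  have hdℓ : d ℓ = (γ (ls : V)).domRestrict S := by
    ext X
    exact (hls X).symm
  have hcaseγ : ∀ (α : Module.Dual ℝ V) (x : S), P' α (γ (x : V)) = P α (γ (x : V)) := by
    intro α x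
    have e1 : hs (d α) (d (γ (x : V))) = α (x : V) := by
      rw [hdγ, hssymm, hsinv]
      rfl
    have e2 : (γ (x : V)) (ls : V) = ℓ (x : V) := by
      rw [hγsymm]; exact hls x
    have e3 : (γ (x : V)) n = 0 := hγn _
    have e4 : P α (γ (x : V)) = α (x : V) - α n * ℓ (x : V) := by
      have := h4 α (x : V); linarith
    simp only [hP', LinearMap.add_apply, LinearMap.sub_apply, LinearMap.smul_apply,
      LinearMap.compl₁₂_apply, Bform_apply, smul_eq_mul]
    rw [show (S.subtype.dualMap) α = d α from rfl]
    rw [e1, e2, e3, e4]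
    ring
  have hcaseℓ : ∀ α : Module.Dual ℝ V, P' α ℓ = P α ℓ := by
    intro α
    have e1 : hs (d α) (d ℓ) = α (ls : V) := by
      rw [hdℓ, hssymm, hsinv]
      rfl
    have e2 : ℓ (ls : V) = γ (ls : V) (ls : V) := (hls ls).symm
    have e3 : P α ℓ = -(ℓ2 * α n) := by have := h3 α; linarith
    simp only [hP', LinearMap.add_apply, LinearMap.sub_apply, LinearMap.smul_apply,
      LinearMap.compl₁₂_apply, Bform_apply, smul_eq_mul]
    rw [show (S.subtype.dualMap) α = d α from rfl]
    rw [e1, e2, e3, h2, hc]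
    ring
  have hPP' : P = P' := by
    ext α β
    obtain ⟨x, t, rfl⟩ := hdecomp β
    rw [map_add, map_add, map_smul, map_smul, hcaseγ α x, hcaseℓ α]
  -- now compute the contraction
  have hcontr : contr P ℛ = contr hs (ℛ.compl₁₂ S.subtype S.subtype)
      - ℛ (ls : V) n - ℛ n (ls : V) + c * ℛ n n := by
    rw [hPP', hP']
    have lin : contr (hs.compl₁₂ d d - Bform n (ls : V) - Bform (ls : V) n + c • Bform n n) ℛ
        = contr (hs.compl₁₂ d d) ℛ - contr (Bform n (ls : V)) ℛ
          - contr (Bform (ls : V) n) ℛ + c * contr (Bform n n) ℛ := by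
      simp only [contr_apply', LinearMap.comp_add, LinearMap.comp_sub, LinearMap.comp_smul,
        LinearMap.add_comp, LinearMap.sub_comp, LinearMap.smul_comp, map_add, map_sub,
        map_smul, smul_eq_mul]
    rw [lin, contr_Bform, contr_Bform, contr_Bform, hd, contr_compl₁₂]
  rw [hcontr, hRsymm (ls : V) n]
  ring
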